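/- Let D_n = (p_n, e_n, m_n) be the polarization process of the three-message quantized decoder (each step applies the variable-node or check-node transform with probability 1/2 each). Define F_n = p_n - 4√(p_n·m_n). Then (F_n) is a submartingale: E[F_{n+1} | D_n] ≥ F_n. -/

import Mathlib

/-!
Given `D n`, the next state is `vplus (D n)` or `vminus (D n)` with probability `1/2` each, and
the coin `B n` is independent of `D n`, which is a function of `B 0, …, B (n-1)`. Hence
`E[F(D (n+1)) | D n] = (F(vplus (D n)) + F(vminus (D n)))/2`, and the claim reduces to the
deterministic inequality `F d ≤ (F(vplus d) + F(vminus d))/2` on the simplex. With `s = √(pm)`,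
the products `p m` of `vplus d` and `vminus d` have square roots `s √((p+2e)(m+2e))` and
`s √(2(p²+m²))`; bounding the first root by AM-GM and the second by
`2√(2(p²+m²)) ≤ 3(p+m) - s` leaves a slack of `m²/2 ≥ 0`.
-/

open MeasureTheory ProbabilityTheory

/-- Potential function `F(p,e,m) = p - 4√(pm)`. -/
noncomputable def Fpot (d : ℝ × ℝ × ℝ) : ℝ := d.1 - 4 * Real.sqrt (d.1 * d.2.2)

/-- Variable-node transform of a ternary density `(p,e,m)`. -/
def vplus (d : ℝ × ℝ × ℝ) : ℝ × ℝ × ℝ :=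
  (d.1^2 + 2*d.1*d.2.1, d.2.1^2 + 2*d.1*d.2.2, d.2.2^2 + 2*d.2.1*d.2.2)

/-- Check-node transform of a ternary density `(p,e,m)`. -/
def vminus (d : ℝ × ℝ × ℝ) : ℝ × ℝ × ℝ :=
  (d.1^2 + d.2.2^2, 1 - (1 - d.2.1)^2, 2*d.1*d.2.2)

lemma Real.sqrt_mul_le_add_div_two {x y : ℝ} (h : 0 ≤ x + y) : √(x * y) ≤ (x + y) / 2 :=
  (Real.sqrt_le_left (by linarith)).2 (by nlinarith [sq_nonneg (x - y)])

lemma two_mul_sqrt_two_mul_sq_add_sq_le {p m : ℝ} (hp : 0 ≤ p) (hm : 0 ≤ m) :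
    2 * √(2 * (p ^ 2 + m ^ 2)) ≤ 3 * (p + m) - √(p * m) := by
  have hs : √(p * m) ≤ (p + m) / 2 := Real.sqrt_mul_le_add_div_two (by linarith)
  have hss : √(p * m) ^ 2 = p * m := Real.sq_sqrt (by positivity)
  have hs0 : 0 ≤ √(p * m) := Real.sqrt_nonneg _
  suffices √(2 * (p ^ 2 + m ^ 2)) ≤ (3 * (p + m) - √(p * m)) / 2 by linarith
  refine (Real.sqrt_le_left (by linarith)).2 ?_
  nlinarith [sq_nonneg (p + m - 3 * √(p * m))]

def InSimplex (d : ℝ × ℝ × ℝ) : Prop :=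
  0 ≤ d.1 ∧ 0 ≤ d.2.1 ∧ 0 ≤ d.2.2 ∧ d.1 + d.2.1 + d.2.2 = 1

namespace InSimplex

variable {d : ℝ × ℝ × ℝ}

lemma vplus (h : InSimplex d) : InSimplex (vplus d) := by
  obtain ⟨p, e, m⟩ := d
  obtain ⟨hp, he, hm, hsum⟩ := h
  dsimp only at hp he hm hsum
  dsimp only [_root_.vplus]
  refine ⟨by positivity, by positivity, by positivity, ?_⟩
  linear_combination (p + e + m + 1) * hsum

lemma vminus (h : InSimplex d) : InSimplex (vminus d) := by
  obtain ⟨p, e, m⟩ := d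
  obtain ⟨hp, he, hm, hsum⟩ := h
  dsimp only at hp he hm hsum
  dsimp only [_root_.vminus]
  refine ⟨by positivity, by nlinarith, by positivity, ?_⟩
  linear_combination (p + m + 1 - e) * hsum

lemma ite (h : InSimplex d) (b : Bool) :
    InSimplex (if b then _root_.vplus d else _root_.vminus d) := by
  split
  exacts [h.vplus, h.vminus]

lemma norm_Fpot_le (h : InSimplex d) : ‖Fpot d‖ ≤ 2 := by
  obtain ⟨p, e, m⟩ := d
  obtain ⟨hp, he, hm, hsum⟩ := h
  dsimp only at hp he hm hsum
  have hs : √(p * m) ≤ (p + m) / 2 := Real.sqrt_mul_le_add_div_two (by linarith)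
  have hs0 : 0 ≤ √(p * m) := Real.sqrt_nonneg _
  rw [Real.norm_eq_abs, abs_le]
  constructor <;> dsimp only [Fpot] <;> linarith

lemma Fpot_le_avg (h : InSimplex d) :
    Fpot d ≤ 2⁻¹ * Fpot (_root_.vplus d) + 2⁻¹ * Fpot (_root_.vminus d) := by
  obtain ⟨p, e, m⟩ := d
  obtain ⟨hp, he, hm, hsum⟩ := h
  dsimp only at hp he hm hsum
  set s := √(p * m)
  have hs : 0 ≤ s := Real.sqrt_nonneg _
  have hss : s ^ 2 = p * m := Real.sq_sqrt (by positivity)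
  have hplus : √((p ^ 2 + 2 * p * e) * (m ^ 2 + 2 * e * m)) =
      s * √((p + 2 * e) * (m + 2 * e)) := by
    rw [← Real.sqrt_mul (by positivity)]; ring_nf
  have hminus : √((p ^ 2 + m ^ 2) * (2 * p * m)) = s * √(2 * (p ^ 2 + m ^ 2)) := by
    rw [← Real.sqrt_mul (by positivity)]; ring_nf
  have hA := Real.sqrt_mul_le_add_div_two (x := p + 2 * e) (y := m + 2 * e) (by linarith)
  have hB := two_mul_sqrt_two_mul_sq_add_sq_le hp hm
  simp only [Fpot, _root_.vplus, _root_.vminus, hplus, hminus]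
  nlinarith [mul_le_mul_of_nonneg_left hA hs, mul_le_mul_of_nonneg_left hB hs, sq_nonneg m]

end InSimplex

lemma measurable_Fpot : Measurable Fpot := by unfold Fpot; fun_prop

lemma measurable_vplus : Measurable vplus := by unfold vplus; fun_prop

lemma measurable_vminus : Measurable vminus := by unfold vminus; fun_prop

lemma measurable_uncurry_ite_vplus_vminus :
    Measurable (Function.uncurry fun (b : Bool) d => if b then vplus d else vminus d) :=
  measurable_from_prod_countable_right fun b => by
    cases b <;> simp [measurable_vplus, measurable_vminus]

section CondExp

variable {Ω : Type*} {m m' mΩ : MeasurableSpace Ω} {μ : Measure Ω}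

theorem condExp_mul_of_indep [IsFiniteMeasure μ] (hm : m ≤ mΩ) (hm' : m' ≤ mΩ)
    (hind : Indep m' m μ) {f g : Ω → ℝ} (hf : StronglyMeasurable[m] f) {C : ℝ}
    (hfC : ∀ᵐ ω ∂μ, ‖f ω‖ ≤ C)
    (hg : StronglyMeasurable[m'] g) (hgi : Integrable g μ) :
    μ[f * g | m] =ᵐ[μ] fun ω => f ω * μ[g] := by
  filter_upwards [condExp_stronglyMeasurable_mul_of_bound hm hf hgi C hfC,
    condExp_indep_eq hm' hm hg hind] with ω hmul hconst
  rw [hmul, Pi.mul_apply, hconst]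

theorem condExp_indicator_of_indep [IsFiniteMeasure μ] (hm : m ≤ mΩ) {s : Set Ω}
    (hs : MeasurableSet[m'] s) (hm' : m' ≤ mΩ) (hind : Indep m' m μ) {f : Ω → ℝ}
    (hf : StronglyMeasurable[m] f) {C : ℝ} (hfC : ∀ᵐ ω ∂μ, ‖f ω‖ ≤ C) :
    μ[s.indicator f | m] =ᵐ[μ] fun ω => μ.real s * f ω := by
  have hprod : s.indicator f = f * s.indicator 1 := by
    ext ω; by_cases hω : ω ∈ s <;> simp [hω]
  have hsm : StronglyMeasurable[m'] (s.indicator (1 : Ω → ℝ)) :=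
    stronglyMeasurable_const.indicator hs
  have hsi : Integrable (s.indicator (1 : Ω → ℝ)) μ :=
    (integrable_const (1 : ℝ)).indicator (hm' _ hs)
  filter_upwards [condExp_mul_of_indep hm hm' hind hf hfC hsm hsi] with ω h
  rw [hprod, h, integral_indicator_one (hm' _ hs), mul_comm]

theorem condExp_ite_of_indep [IsFiniteMeasure μ] (hm : m ≤ mΩ) {b : Ω → Bool}
    (hb : Measurable b) (hind : Indep (MeasurableSpace.comap b inferInstance) m μ)
    {f g : Ω → ℝ} (hf : StronglyMeasurable[m] f) (hg : StronglyMeasurable[m] g) {C : ℝ}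
    (hfC : ∀ᵐ ω ∂μ, ‖f ω‖ ≤ C) (hgC : ∀ᵐ ω ∂μ, ‖g ω‖ ≤ C) :
    μ[fun ω => if b ω then f ω else g ω | m] =ᵐ[μ]
      fun ω => μ.real {ω | b ω} * f ω + μ.real {ω | b ω = false} * g ω := by
  have hlevel (t : Bool) : MeasurableSet[MeasurableSpace.comap b inferInstance] {ω | b ω = t} :=
    ⟨{t}, measurableSet_singleton t, rfl⟩
  have hsplit : (fun ω => if b ω then f ω else g ω) =
      {ω | b ω}.indicator f + {ω | b ω = false}.indicator g := by
    ext ω; cases hω : b ω <;> simp [hω]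
  have hfi : Integrable f μ := .of_bound (hf.mono hm).aestronglyMeasurable C hfC
  have hgi : Integrable g μ := .of_bound (hg.mono hm).aestronglyMeasurable C hgC
  rw [hsplit]
  filter_upwards [condExp_add (hfi.indicator (hb.comap_le _ (hlevel true)))
      (hgi.indicator (hb.comap_le _ (hlevel false))) m,
    condExp_indicator_of_indep hm (hlevel true) hb.comap_le hind hf hfC,
    condExp_indicator_of_indep hm (hlevel false) hb.comap_le hind hg hgC] with ω h h₁ h₂
  rw [h, Pi.add_apply, h₁, h₂]

theorem measureReal_eq_half_of_fair [IsProbabilityMeasure μ] {b : Ω → Bool} (hb : Measurable b)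
    (hfair : μ {ω | b ω = true} = 1 / 2) (t : Bool) : μ.real {ω | b ω = t} = 2⁻¹ := by
  have htrue : μ.real {ω | b ω = true} = 2⁻¹ := by simp [measureReal_def, hfair]
  have hmeas : MeasurableSet {ω | b ω = true} := hb (measurableSet_singleton true)
  cases t
  · rw [show {ω | b ω = false} = {ω | b ω = true}ᶜ by ext; simp,
      probReal_compl_eq_one_sub hmeas, htrue]
    norm_num
  · exact htrue

end CondExp

section Recursion

variable {Ω α β : Type*} {mΩ : MeasurableSpace Ω} [MeasurableSpace α] [MeasurableSpace β]
  {B : ℕ → Ω → β} {X : ℕ → Ω → α} {F : β → α → α} {x₀ : α}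

theorem measurable_iSup_comap_of_recursion (hF : Measurable (Function.uncurry F))
    (h0 : ∀ ω, X 0 ω = x₀) (hstep : ∀ n ω, X (n + 1) ω = F (B n ω) (X n ω)) (n : ℕ) :
    Measurable[⨆ i ∈ Set.Iio n, MeasurableSpace.comap (B i) inferInstance] (X n) := by
  induction n with
  | zero =>
    rw [funext h0]
    exact measurable_const
  | succ n ih =>
    rw [funext (hstep n)]
    have hB :
        Measurable[⨆ i ∈ Set.Iio (n + 1), MeasurableSpace.comap (B i) inferInstance] (B n) :=
      (comap_measurable (B n)).mono
        (le_iSup₂ (f := fun i (_ : i ∈ Set.Iio (n + 1)) =>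
          MeasurableSpace.comap (B i) inferInstance) n (Nat.lt_succ_self n)) le_rfl
    have hX := ih.mono (biSup_mono fun i (hi : i < n) => Nat.lt_succ_of_lt hi) le_rfl
    exact hF.comp (hB.prodMk hX)

theorem indep_comap_of_recursion {μ : Measure Ω} (hB : ∀ n, Measurable (B n))
    (hind : iIndepFun B μ) (hF : Measurable (Function.uncurry F))
    (h0 : ∀ ω, X 0 ω = x₀) (hstep : ∀ n ω, X (n + 1) ω = F (B n ω) (X n ω)) (n : ℕ) :
    Indep (MeasurableSpace.comap (B n) inferInstance)
      (MeasurableSpace.comap (X n) inferInstance) μ := by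
  have h := indep_iSup_of_disjoint (fun i => (hB i).comap_le) hind.iIndep
    (Set.disjoint_singleton_left.2 (lt_irrefl n) : Disjoint {n} (Set.Iio n))
  rw [iSup_singleton] at h
  exact indep_of_indep_of_le_right h (measurable_iSup_comap_of_recursion hF h0 hstep n).comap_le

end Recursion

/-- The potential process `F_n = p_n - 4√(p_n m_n)` of the quantized polarization
process is a submartingale: `E[F_{n+1} | D_n] ≥ F_n` almost surely. -/
theorem stmt_12 {Ω : Type*} [MeasurableSpace Ω] (μ : Measure Ω) [IsProbabilityMeasure μ]
    (B : ℕ → Ω → Bool) (D : ℕ → Ω → ℝ × ℝ × ℝ) (d₀ : ℝ × ℝ × ℝ)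
    (hBmeas : ∀ n, Measurable (B n))
    (hBindep : iIndepFun B μ)
    (hBfair : ∀ n, μ {ω | B n ω = true} = 1/2)
    (hd₀ : 0 ≤ d₀.1 ∧ 0 ≤ d₀.2.1 ∧ 0 ≤ d₀.2.2 ∧ d₀.1 + d₀.2.1 + d₀.2.2 = 1)
    (hD0 : ∀ ω, D 0 ω = d₀)
    (hstep : ∀ n ω, D (n+1) ω = if B n ω then vplus (D n ω) else vminus (D n ω)) :
    ∀ n, (fun ω => Fpot (D n ω))
      ≤ᵐ[μ] μ[(fun ω => Fpot (D (n+1) ω)) | MeasurableSpace.comap (D n) inferInstance] := by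
  intro n
  have hF := measurable_uncurry_ite_vplus_vminus
  have hD : Measurable (D n) := (measurable_iSup_comap_of_recursion hF hD0 hstep n).mono
    (iSup₂_le fun i _ => (hBmeas i).comap_le) le_rfl
  have hsimplex : ∀ k ω, InSimplex (D k ω) := by
    intro k
    induction k with
    | zero => intro ω; rw [hD0]; exact hd₀
    | succ k ih => intro ω; rw [hstep]; exact (ih ω).ite _
  have hcond := condExp_ite_of_indep (f := fun ω => Fpot (vplus (D n ω)))
    (g := fun ω => Fpot (vminus (D n ω))) hD.comap_le (hBmeas n)
    (indep_comap_of_recursion hBmeas hBindep hF hD0 hstep n)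
    ((measurable_Fpot.comp measurable_vplus).comp (comap_measurable (D n))).stronglyMeasurable
    ((measurable_Fpot.comp measurable_vminus).comp (comap_measurable (D n))).stronglyMeasurable
    (.of_forall fun ω => (hsimplex n ω).vplus.norm_Fpot_le)
    (.of_forall fun ω => (hsimplex n ω).vminus.norm_Fpot_le)
  have hFstep : (fun ω => Fpot (D (n + 1) ω)) =
      fun ω => if B n ω then Fpot (vplus (D n ω)) else Fpot (vminus (D n ω)) := by
    ext ω; rw [hstep, apply_ite Fpot]
  filter_upwards [hcond] with ω hω
  rw [hFstep, hω, measureReal_eq_half_of_fair (hBmeas n) (hBfair n),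
    measureReal_eq_half_of_fair (hBmeas n) (hBfair n)]
  exact (hsimplex n ω).Fpot_le_avg
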